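/- For every real t, the first moment of the position operator in the Heisenberg evolution starting from the single excitation δ_0 satisfies: the series Σ_{k=0}^∞ (t^k / k!) · ⟨δ_0, ad^k(X) δ_0⟩ converges absolutely and its sum equals (1 + cosh(2t))/2. In particular, the expectation value of the position grows exponentially in time. -/

import Mathlib

/-!
The commutation relations `ad X = P`, `ad P = 4X - 2` and `ad 1 = 0` give `ad² P = 4P`, so the
odd iterates `ad^(2n+1) X = 4ⁿ P` have vanishing diagonal entry at `δ_0`, while the even iterates
`ad^(2n+2) X = 4ⁿ (4X - 2)` have entry `2 · 4ⁿ` there. The moment series is therefore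
`(1 + Σₙ (2t)^(2n) / (2n)!) / 2 = (1 + cosh 2t) / 2`.
-/

open Complex Finsupp

/-- The position operator `X` on the space of finitely supported complex sequences:
`X δ_l = (l+1) δ_l`. -/
noncomputable def Xop : (ℕ →₀ ℂ) →ₗ[ℂ] (ℕ →₀ ℂ) :=
  Finsupp.linearCombination ℂ fun l : ℕ => ((l : ℂ) + 1) • Finsupp.single l 1

/-- The effective single-excitation Hamiltonian `E`:
`E δ_l = i (l+1) δ_{l+1} - i l δ_{l-1}` (the second term vanishing for `l = 0`). -/
noncomputable def Eop : (ℕ →₀ ℂ) →ₗ[ℂ] (ℕ →₀ ℂ) :=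
  Finsupp.linearCombination ℂ fun l : ℕ =>
    (Complex.I * ((l : ℂ) + 1)) • Finsupp.single (l + 1) 1
      - (Complex.I * (l : ℂ)) • Finsupp.single (l - 1) 1

/-- The momentum-type operator `P`:
`P δ_l = (l+1) δ_{l+1} + l δ_{l-1}` (the second term vanishing for `l = 0`). -/
noncomputable def Pop : (ℕ →₀ ℂ) →ₗ[ℂ] (ℕ →₀ ℂ) :=
  Finsupp.linearCombination ℂ fun l : ℕ =>
    ((l : ℂ) + 1) • Finsupp.single (l + 1) 1 + (l : ℂ) • Finsupp.single (l - 1) 1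


/-- The generator of Heisenberg-picture time evolution: `ad A = i (E ∘ A - A ∘ E)`. -/
noncomputable def adE :
    ((ℕ →₀ ℂ) →ₗ[ℂ] (ℕ →₀ ℂ)) → ((ℕ →₀ ℂ) →ₗ[ℂ] (ℕ →₀ ℂ)) :=
  fun A => Complex.I • (Eop ∘ₗ A - A ∘ₗ Eop)

/-- The inner product `⟨φ, ψ⟩ = Σ_l conj(φ_l) ψ_l` on finitely supported sequences. -/
noncomputable def innerF (φ ψ : ℕ →₀ ℂ) : ℂ :=
  φ.sum fun l c => (starRingEnd ℂ) c * ψ l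

lemma Xop_single (l : ℕ) : Xop (single l 1) = ((l : ℂ) + 1) • single l 1 := by
  simp [Xop]

lemma Eop_single (l : ℕ) :
    Eop (single l 1) = (I * ((l : ℂ) + 1)) • single (l + 1) 1 - (I * l) • single (l - 1) 1 := by
  simp [Eop]

lemma Pop_single (l : ℕ) :
    Pop (single l 1) = ((l : ℂ) + 1) • single (l + 1) 1 + (l : ℂ) • single (l - 1) 1 := by
  simp [Pop]

lemma adE_apply (A : (ℕ →₀ ℂ) →ₗ[ℂ] (ℕ →₀ ℂ)) (v : ℕ →₀ ℂ) :
    adE A v = I • (Eop (A v) - A (Eop v)) := rfl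

lemma adE_smul (c : ℂ) (A : (ℕ →₀ ℂ) →ₗ[ℂ] (ℕ →₀ ℂ)) : adE (c • A) = c • adE A := by
  simp only [adE, LinearMap.comp_smul, LinearMap.smul_comp]
  module

lemma adE_sub (A B : (ℕ →₀ ℂ) →ₗ[ℂ] (ℕ →₀ ℂ)) : adE (A - B) = adE A - adE B := by
  simp only [adE, LinearMap.comp_sub, LinearMap.sub_comp]
  module

lemma adE_id : adE LinearMap.id = 0 := by
  ext
  simp [adE]

lemma adE_Xop : adE Xop = Pop := by
  refine Finsupp.lhom_ext' fun l => LinearMap.ext_ring ?_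
  rcases l with _ | n <;>
  simp only [LinearMap.comp_apply, lsingle_apply, adE_apply, Xop_single, Eop_single, Pop_single,
    map_smul, map_sub, Nat.add_sub_cancel, Nat.zero_sub] <;>
  push_cast <;>
  match_scalars <;> ring_nf <;> simp [I_sq]

lemma adE_Pop : adE Pop = (4 : ℂ) • Xop - (2 : ℂ) • LinearMap.id := by
  refine Finsupp.lhom_ext' fun l => LinearMap.ext_ring ?_
  -- the truncated indices `l - 1` and `l - 1 - 1` need `l = 0` and `l = 1` treated apart
  rcases l with _ | _ | n <;>
  simp only [LinearMap.comp_apply, lsingle_apply, adE_apply, Xop_single, Eop_single, Pop_single,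
    map_smul, map_sub, map_add, LinearMap.sub_apply, LinearMap.smul_apply, LinearMap.id_apply,
    Nat.add_sub_cancel, Nat.zero_sub] <;>
  push_cast <;>
  match_scalars <;> ring_nf <;> simp [I_sq]

lemma adE_adE_Pop : adE (adE Pop) = (4 : ℂ) • Pop := by
  rw [adE_Pop, adE_sub, adE_smul, adE_smul, adE_Xop, adE_id]
  module

lemma adE_iterate_odd_Xop (n : ℕ) : adE^[2 * n + 1] Xop = (4 : ℂ) ^ n • Pop := by
  induction n with
  | zero => simp [adE_Xop]
  | succ n ih =>
    rw [show 2 * (n + 1) + 1 = 2 * n + 1 + 1 + 1 by ring, Function.iterate_succ_apply',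
      Function.iterate_succ_apply', ih, adE_smul, adE_smul, adE_adE_Pop, smul_smul, pow_succ]

lemma adE_iterate_even_Xop (n : ℕ) :
    adE^[2 * n + 2] Xop = (4 : ℂ) ^ n • ((4 : ℂ) • Xop - (2 : ℂ) • LinearMap.id) := by
  rw [Function.iterate_succ_apply', adE_iterate_odd_Xop, adE_smul, adE_Pop]

lemma innerF_single_zero_left (ψ : ℕ →₀ ℂ) : innerF (single 0 1) ψ = ψ 0 := by
  simp [innerF]

lemma adE_iterate_odd_Xop_apply_zero (n : ℕ) : (adE^[2 * n + 1] Xop) (single 0 1) 0 = 0 := by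
  simp [adE_iterate_odd_Xop, Pop_single]

lemma adE_iterate_even_Xop_apply_zero (n : ℕ) :
    (adE^[2 * n] Xop) (single 0 1) 0 = (4 ^ n + if n = 0 then 1 else 0) / 2 := by
  rcases n with _ | n
  · simp [Xop_single]
  · rw [show 2 * (n + 1) = 2 * n + 2 by ring, adE_iterate_even_Xop]
    norm_num [Xop_single, pow_succ, mul_div_assoc]

/-- The first moment of position in the Heisenberg evolution starting from `δ_0`:
`Σ_k (t^k/k!) ⟨δ_0, ad^k(X) δ_0⟩` converges absolutely to `(1 + cosh(2t))/2`. -/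
theorem heisenberg_first_moment (t : ℝ) :
    Summable (fun k : ℕ =>
      ‖((t ^ k / (k.factorial : ℝ) : ℝ) : ℂ) *
        innerF (Finsupp.single 0 1) ((adE^[k] Xop) (Finsupp.single 0 1))‖) ∧
    HasSum (fun k : ℕ =>
      ((t ^ k / (k.factorial : ℝ) : ℝ) : ℂ) *
        innerF (Finsupp.single 0 1) ((adE^[k] Xop) (Finsupp.single 0 1)))
      (((1 + Real.cosh (2 * t)) / 2 : ℝ) : ℂ) := by
  set f : ℕ → ℂ := fun k => ((t ^ k / (k.factorial : ℝ) : ℝ) : ℂ) *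
    innerF (Finsupp.single 0 1) ((adE^[k] Xop) (Finsupp.single 0 1))
  have hodd : ∀ k ∉ Set.range (2 * ·), f k = 0 := by
    intro k hk
    obtain ⟨n, rfl | rfl⟩ := Nat.even_or_odd' k
    · exact absurd ⟨n, rfl⟩ hk
    · simp only [f, innerF_single_zero_left, adE_iterate_odd_Xop_apply_zero, mul_zero]
  have heven (n : ℕ) :
      f (2 * n) = ((2 * t : ℂ) ^ (2 * n) / (2 * n).factorial + if n = 0 then 1 else 0) / 2 := by
    simp only [f, innerF_single_zero_left, adE_iterate_even_Xop_apply_zero]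
    split_ifs with hn
    · simp [hn]
    · push_cast
      rw [mul_pow, pow_mul (2 : ℂ)]
      ring
  have hsum : HasSum f (((1 + Real.cosh (2 * t)) / 2 : ℝ) : ℂ) := by
    rw [← (mul_right_injective₀ two_ne_zero).hasSum_iff hodd,
      show (((1 + Real.cosh (2 * t)) / 2 : ℝ) : ℂ) = (cosh (2 * t) + 1) / 2 by push_cast; ring]
    simpa only [Function.comp_def, heven] using
      ((Complex.hasSum_cosh (2 * t)).add (hasSum_ite_eq 0 1)).div_const 2
  exact ⟨summable_norm_iff.mpr hsum.summable, hsum⟩
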